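/- arXiv:2410.06445 — 2 statements merged into one kernel-verified Lean document; each statement's English description precedes it below -/
import Mathlib

section
/- The scalar curvature of the Walker metric g_a on ℝ⁴ equals τ = a_{11} + a_{22} at every point. -/
open scoped BigOperators

/-- Partial derivative of a function on `ℝ⁴` in the `i`-th coordinate direction. -/
noncomputable def pd (i : Fin 4) (f : (Fin 4 → ℝ) → ℝ) : (Fin 4 → ℝ) → ℝ :=
  fun x => fderiv ℝ f x (Pi.single i 1)

/-- The Walker metric `g_a`: coordinate components `g_{ij}`. -/
noncomputable def gLow (a : (Fin 4 → ℝ) → ℝ) (i j : Fin 4) : (Fin 4 → ℝ) → ℝ :=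
  fun x =>
    if (i = 0 ∧ j = 2) ∨ (i = 2 ∧ j = 0) ∨ (i = 1 ∧ j = 3) ∨ (i = 3 ∧ j = 1) then 1
    else if (i = 2 ∧ j = 2) ∨ (i = 3 ∧ j = 3) then a x
    else 0

/-- The inverse metric components `g^{ij}`. -/
noncomputable def gUp (a : (Fin 4 → ℝ) → ℝ) (i j : Fin 4) : (Fin 4 → ℝ) → ℝ :=
  fun x =>
    if (i = 0 ∧ j = 2) ∨ (i = 2 ∧ j = 0) ∨ (i = 1 ∧ j = 3) ∨ (i = 3 ∧ j = 1) then 1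
    else if (i = 0 ∧ j = 0) ∨ (i = 1 ∧ j = 1) then -(a x)
    else 0

/-- Christoffel symbols `Γ^k_{ij}` of the Walker metric `g_a`. -/
noncomputable def christoffel (a : (Fin 4 → ℝ) → ℝ) (k i j : Fin 4) : (Fin 4 → ℝ) → ℝ :=
  fun x => (1/2) * ∑ l : Fin 4,
    gUp a k l x * (pd i (gLow a j l) x + pd j (gLow a i l) x - pd l (gLow a i j) x)

/-- Curvature tensor components `R^l_{ijk}` of the Walker metric `g_a`. -/
noncomputable def curv (a : (Fin 4 → ℝ) → ℝ) (l i j k : Fin 4) : (Fin 4 → ℝ) → ℝ :=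
  fun x => pd i (christoffel a l j k) x - pd j (christoffel a l i k) x
    + ∑ m : Fin 4,
        (christoffel a l i m x * christoffel a m j k x
          - christoffel a l j m x * christoffel a m i k x)

/-- The `(0,4)`-curvature tensor `R_{ijkl} = Σ_m g_{ml} R^m_{ijk}`. -/
noncomputable def curvLow (a : (Fin 4 → ℝ) → ℝ) (i j k l : Fin 4) : (Fin 4 → ℝ) → ℝ :=
  fun x => ∑ m : Fin 4, gLow a m l x * curv a m i j k x

/-- Ricci tensor components `ρ_{jk} = Σ_i R^i_{ijk}`. -/
noncomputable def ricci (a : (Fin 4 → ℝ) → ℝ) (j k : Fin 4) : (Fin 4 → ℝ) → ℝ :=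
  fun x => ∑ i : Fin 4, curv a i i j k x

/-- Scalar curvature `τ = Σ_{j,k} g^{jk} ρ_{jk}`. -/
noncomputable def scalarCurv (a : (Fin 4 → ℝ) → ℝ) : (Fin 4 → ℝ) → ℝ :=
  fun x => ∑ j : Fin 4, ∑ k : Fin 4, gUp a j k x * ricci a j k x

/-- Covariant derivative of the Ricci tensor:
`(∇_i ρ)_{jk} = ∂_i ρ_{jk} − Σ_m Γ^m_{ij} ρ_{mk} − Σ_m Γ^m_{ik} ρ_{jm}`. -/
noncomputable def covRicci (a : (Fin 4 → ℝ) → ℝ) (i j k : Fin 4) : (Fin 4 → ℝ) → ℝ :=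
  fun x => pd i (ricci a j k) x
    - ∑ m : Fin 4, christoffel a m i j x * ricci a m k x
    - ∑ m : Fin 4, christoffel a m i k x * ricci a j m x

/-- Partial derivative of a function on `ℝ²` in the `i`-th coordinate direction. -/
noncomputable def pd2 (i : Fin 2) (f : (Fin 2 → ℝ) → ℝ) : (Fin 2 → ℝ) → ℝ :=
  fun x => fderiv ℝ f x (Pi.single i 1)


lemma gLow_def (a : (Fin 4 → ℝ) → ℝ) (i j : Fin 4) : gLow a i j = fun x =>
    if (i = 0 ∧ j = 2) ∨ (i = 2 ∧ j = 0) ∨ (i = 1 ∧ j = 3) ∨ (i = 3 ∧ j = 1) then 1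
    else if (i = 2 ∧ j = 2) ∨ (i = 3 ∧ j = 3) then a x
    else 0 := rfl

lemma chr000 (a : (Fin 4 → ℝ) → ℝ) : christoffel a 0 0 0 = fun _ => (0:ℝ) := by
  funext x
  simp [christoffel, gUp, gLow_def, pd, Fin.sum_univ_four] <;> ring

lemma chr001 (a : (Fin 4 → ℝ) → ℝ) : christoffel a 0 0 1 = fun _ => (0:ℝ) := by
  funext x
  simp [christoffel, gUp, gLow_def, pd, Fin.sum_univ_four] <;> ring

lemma chr002 (a : (Fin 4 → ℝ) → ℝ) : christoffel a 0 0 2 = fun x => (1/2:ℝ) * pd 0 a x := by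
  funext x
  simp [christoffel, gUp, gLow_def, pd, Fin.sum_univ_four] <;> ring

lemma chr003 (a : (Fin 4 → ℝ) → ℝ) : christoffel a 0 0 3 = fun _ => (0:ℝ) := by
  funext x
  simp [christoffel, gUp, gLow_def, pd, Fin.sum_univ_four] <;> ring

lemma chr010 (a : (Fin 4 → ℝ) → ℝ) : christoffel a 0 1 0 = fun _ => (0:ℝ) := by
  funext x
  simp [christoffel, gUp, gLow_def, pd, Fin.sum_univ_four] <;> ring

lemma chr011 (a : (Fin 4 → ℝ) → ℝ) : christoffel a 0 1 1 = fun _ => (0:ℝ) := by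
  funext x
  simp [christoffel, gUp, gLow_def, pd, Fin.sum_univ_four] <;> ring

lemma chr012 (a : (Fin 4 → ℝ) → ℝ) : christoffel a 0 1 2 = fun x => (1/2:ℝ) * pd 1 a x := by
  funext x
  simp [christoffel, gUp, gLow_def, pd, Fin.sum_univ_four] <;> ring

lemma chr013 (a : (Fin 4 → ℝ) → ℝ) : christoffel a 0 1 3 = fun _ => (0:ℝ) := by
  funext x
  simp [christoffel, gUp, gLow_def, pd, Fin.sum_univ_four] <;> ring

lemma chr020 (a : (Fin 4 → ℝ) → ℝ) : christoffel a 0 2 0 = fun x => (1/2:ℝ) * pd 0 a x := by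
  funext x
  simp [christoffel, gUp, gLow_def, pd, Fin.sum_univ_four] <;> ring

lemma chr021 (a : (Fin 4 → ℝ) → ℝ) : christoffel a 0 2 1 = fun x => (1/2:ℝ) * pd 1 a x := by
  funext x
  simp [christoffel, gUp, gLow_def, pd, Fin.sum_univ_four] <;> ring

lemma chr022 (a : (Fin 4 → ℝ) → ℝ) : christoffel a 0 2 2 = fun x => (1/2:ℝ) * (a x * pd 0 a x + pd 2 a x) := by
  funext x
  simp [christoffel, gUp, gLow_def, pd, Fin.sum_univ_four] <;> ring

lemma chr023 (a : (Fin 4 → ℝ) → ℝ) : christoffel a 0 2 3 = fun x => (1/2:ℝ) * pd 3 a x := by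
  funext x
  simp [christoffel, gUp, gLow_def, pd, Fin.sum_univ_four] <;> ring

lemma chr030 (a : (Fin 4 → ℝ) → ℝ) : christoffel a 0 3 0 = fun _ => (0:ℝ) := by
  funext x
  simp [christoffel, gUp, gLow_def, pd, Fin.sum_univ_four] <;> ring

lemma chr031 (a : (Fin 4 → ℝ) → ℝ) : christoffel a 0 3 1 = fun _ => (0:ℝ) := by
  funext x
  simp [christoffel, gUp, gLow_def, pd, Fin.sum_univ_four] <;> ring

lemma chr032 (a : (Fin 4 → ℝ) → ℝ) : christoffel a 0 3 2 = fun x => (1/2:ℝ) * pd 3 a x := by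
  funext x
  simp [christoffel, gUp, gLow_def, pd, Fin.sum_univ_four] <;> ring

lemma chr033 (a : (Fin 4 → ℝ) → ℝ) : christoffel a 0 3 3 = fun x => (1/2:ℝ) * (a x * pd 0 a x - pd 2 a x) := by
  funext x
  simp [christoffel, gUp, gLow_def, pd, Fin.sum_univ_four] <;> ring

lemma chr100 (a : (Fin 4 → ℝ) → ℝ) : christoffel a 1 0 0 = fun _ => (0:ℝ) := by
  funext x
  simp [christoffel, gUp, gLow_def, pd, Fin.sum_univ_four] <;> ring

lemma chr101 (a : (Fin 4 → ℝ) → ℝ) : christoffel a 1 0 1 = fun _ => (0:ℝ) := by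
  funext x
  simp [christoffel, gUp, gLow_def, pd, Fin.sum_univ_four] <;> ring

lemma chr102 (a : (Fin 4 → ℝ) → ℝ) : christoffel a 1 0 2 = fun _ => (0:ℝ) := by
  funext x
  simp [christoffel, gUp, gLow_def, pd, Fin.sum_univ_four] <;> ring

lemma chr103 (a : (Fin 4 → ℝ) → ℝ) : christoffel a 1 0 3 = fun x => (1/2:ℝ) * pd 0 a x := by
  funext x
  simp [christoffel, gUp, gLow_def, pd, Fin.sum_univ_four] <;> ring

lemma chr110 (a : (Fin 4 → ℝ) → ℝ) : christoffel a 1 1 0 = fun _ => (0:ℝ) := by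
  funext x
  simp [christoffel, gUp, gLow_def, pd, Fin.sum_univ_four] <;> ring

lemma chr111 (a : (Fin 4 → ℝ) → ℝ) : christoffel a 1 1 1 = fun _ => (0:ℝ) := by
  funext x
  simp [christoffel, gUp, gLow_def, pd, Fin.sum_univ_four] <;> ring

lemma chr112 (a : (Fin 4 → ℝ) → ℝ) : christoffel a 1 1 2 = fun _ => (0:ℝ) := by
  funext x
  simp [christoffel, gUp, gLow_def, pd, Fin.sum_univ_four] <;> ring

lemma chr113 (a : (Fin 4 → ℝ) → ℝ) : christoffel a 1 1 3 = fun x => (1/2:ℝ) * pd 1 a x := by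
  funext x
  simp [christoffel, gUp, gLow_def, pd, Fin.sum_univ_four] <;> ring

lemma chr120 (a : (Fin 4 → ℝ) → ℝ) : christoffel a 1 2 0 = fun _ => (0:ℝ) := by
  funext x
  simp [christoffel, gUp, gLow_def, pd, Fin.sum_univ_four] <;> ring

lemma chr121 (a : (Fin 4 → ℝ) → ℝ) : christoffel a 1 2 1 = fun _ => (0:ℝ) := by
  funext x
  simp [christoffel, gUp, gLow_def, pd, Fin.sum_univ_four] <;> ring

lemma chr122 (a : (Fin 4 → ℝ) → ℝ) : christoffel a 1 2 2 = fun x => (1/2:ℝ) * (a x * pd 1 a x - pd 3 a x) := by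
  funext x
  simp [christoffel, gUp, gLow_def, pd, Fin.sum_univ_four] <;> ring

lemma chr123 (a : (Fin 4 → ℝ) → ℝ) : christoffel a 1 2 3 = fun x => (1/2:ℝ) * pd 2 a x := by
  funext x
  simp [christoffel, gUp, gLow_def, pd, Fin.sum_univ_four] <;> ring

lemma chr130 (a : (Fin 4 → ℝ) → ℝ) : christoffel a 1 3 0 = fun x => (1/2:ℝ) * pd 0 a x := by
  funext x
  simp [christoffel, gUp, gLow_def, pd, Fin.sum_univ_four] <;> ring

lemma chr131 (a : (Fin 4 → ℝ) → ℝ) : christoffel a 1 3 1 = fun x => (1/2:ℝ) * pd 1 a x := by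
  funext x
  simp [christoffel, gUp, gLow_def, pd, Fin.sum_univ_four] <;> ring

lemma chr132 (a : (Fin 4 → ℝ) → ℝ) : christoffel a 1 3 2 = fun x => (1/2:ℝ) * pd 2 a x := by
  funext x
  simp [christoffel, gUp, gLow_def, pd, Fin.sum_univ_four] <;> ring

lemma chr133 (a : (Fin 4 → ℝ) → ℝ) : christoffel a 1 3 3 = fun x => (1/2:ℝ) * (a x * pd 1 a x + pd 3 a x) := by
  funext x
  simp [christoffel, gUp, gLow_def, pd, Fin.sum_univ_four] <;> ring

lemma chr200 (a : (Fin 4 → ℝ) → ℝ) : christoffel a 2 0 0 = fun _ => (0:ℝ) := by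
  funext x
  simp [christoffel, gUp, gLow_def, pd, Fin.sum_univ_four] <;> ring

lemma chr201 (a : (Fin 4 → ℝ) → ℝ) : christoffel a 2 0 1 = fun _ => (0:ℝ) := by
  funext x
  simp [christoffel, gUp, gLow_def, pd, Fin.sum_univ_four] <;> ring

lemma chr202 (a : (Fin 4 → ℝ) → ℝ) : christoffel a 2 0 2 = fun _ => (0:ℝ) := by
  funext x
  simp [christoffel, gUp, gLow_def, pd, Fin.sum_univ_four] <;> ring

lemma chr203 (a : (Fin 4 → ℝ) → ℝ) : christoffel a 2 0 3 = fun _ => (0:ℝ) := by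
  funext x
  simp [christoffel, gUp, gLow_def, pd, Fin.sum_univ_four] <;> ring

lemma chr210 (a : (Fin 4 → ℝ) → ℝ) : christoffel a 2 1 0 = fun _ => (0:ℝ) := by
  funext x
  simp [christoffel, gUp, gLow_def, pd, Fin.sum_univ_four] <;> ring

lemma chr211 (a : (Fin 4 → ℝ) → ℝ) : christoffel a 2 1 1 = fun _ => (0:ℝ) := by
  funext x
  simp [christoffel, gUp, gLow_def, pd, Fin.sum_univ_four] <;> ring

lemma chr212 (a : (Fin 4 → ℝ) → ℝ) : christoffel a 2 1 2 = fun _ => (0:ℝ) := by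
  funext x
  simp [christoffel, gUp, gLow_def, pd, Fin.sum_univ_four] <;> ring

lemma chr213 (a : (Fin 4 → ℝ) → ℝ) : christoffel a 2 1 3 = fun _ => (0:ℝ) := by
  funext x
  simp [christoffel, gUp, gLow_def, pd, Fin.sum_univ_four] <;> ring

lemma chr220 (a : (Fin 4 → ℝ) → ℝ) : christoffel a 2 2 0 = fun _ => (0:ℝ) := by
  funext x
  simp [christoffel, gUp, gLow_def, pd, Fin.sum_univ_four] <;> ring

lemma chr221 (a : (Fin 4 → ℝ) → ℝ) : christoffel a 2 2 1 = fun _ => (0:ℝ) := by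
  funext x
  simp [christoffel, gUp, gLow_def, pd, Fin.sum_univ_four] <;> ring

lemma chr222 (a : (Fin 4 → ℝ) → ℝ) : christoffel a 2 2 2 = fun x => (-1/2:ℝ) * pd 0 a x := by
  funext x
  simp [christoffel, gUp, gLow_def, pd, Fin.sum_univ_four] <;> ring

lemma chr223 (a : (Fin 4 → ℝ) → ℝ) : christoffel a 2 2 3 = fun _ => (0:ℝ) := by
  funext x
  simp [christoffel, gUp, gLow_def, pd, Fin.sum_univ_four] <;> ring

lemma chr230 (a : (Fin 4 → ℝ) → ℝ) : christoffel a 2 3 0 = fun _ => (0:ℝ) := by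
  funext x
  simp [christoffel, gUp, gLow_def, pd, Fin.sum_univ_four] <;> ring

lemma chr231 (a : (Fin 4 → ℝ) → ℝ) : christoffel a 2 3 1 = fun _ => (0:ℝ) := by
  funext x
  simp [christoffel, gUp, gLow_def, pd, Fin.sum_univ_four] <;> ring

lemma chr232 (a : (Fin 4 → ℝ) → ℝ) : christoffel a 2 3 2 = fun _ => (0:ℝ) := by
  funext x
  simp [christoffel, gUp, gLow_def, pd, Fin.sum_univ_four] <;> ring

lemma chr233 (a : (Fin 4 → ℝ) → ℝ) : christoffel a 2 3 3 = fun x => (-1/2:ℝ) * pd 0 a x := by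
  funext x
  simp [christoffel, gUp, gLow_def, pd, Fin.sum_univ_four] <;> ring

lemma chr300 (a : (Fin 4 → ℝ) → ℝ) : christoffel a 3 0 0 = fun _ => (0:ℝ) := by
  funext x
  simp [christoffel, gUp, gLow_def, pd, Fin.sum_univ_four] <;> ring

lemma chr301 (a : (Fin 4 → ℝ) → ℝ) : christoffel a 3 0 1 = fun _ => (0:ℝ) := by
  funext x
  simp [christoffel, gUp, gLow_def, pd, Fin.sum_univ_four] <;> ring

lemma chr302 (a : (Fin 4 → ℝ) → ℝ) : christoffel a 3 0 2 = fun _ => (0:ℝ) := by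
  funext x
  simp [christoffel, gUp, gLow_def, pd, Fin.sum_univ_four] <;> ring

lemma chr303 (a : (Fin 4 → ℝ) → ℝ) : christoffel a 3 0 3 = fun _ => (0:ℝ) := by
  funext x
  simp [christoffel, gUp, gLow_def, pd, Fin.sum_univ_four] <;> ring

lemma chr310 (a : (Fin 4 → ℝ) → ℝ) : christoffel a 3 1 0 = fun _ => (0:ℝ) := by
  funext x
  simp [christoffel, gUp, gLow_def, pd, Fin.sum_univ_four] <;> ring

lemma chr311 (a : (Fin 4 → ℝ) → ℝ) : christoffel a 3 1 1 = fun _ => (0:ℝ) := by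
  funext x
  simp [christoffel, gUp, gLow_def, pd, Fin.sum_univ_four] <;> ring

lemma chr312 (a : (Fin 4 → ℝ) → ℝ) : christoffel a 3 1 2 = fun _ => (0:ℝ) := by
  funext x
  simp [christoffel, gUp, gLow_def, pd, Fin.sum_univ_four] <;> ring

lemma chr313 (a : (Fin 4 → ℝ) → ℝ) : christoffel a 3 1 3 = fun _ => (0:ℝ) := by
  funext x
  simp [christoffel, gUp, gLow_def, pd, Fin.sum_univ_four] <;> ring

lemma chr320 (a : (Fin 4 → ℝ) → ℝ) : christoffel a 3 2 0 = fun _ => (0:ℝ) := by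
  funext x
  simp [christoffel, gUp, gLow_def, pd, Fin.sum_univ_four] <;> ring

lemma chr321 (a : (Fin 4 → ℝ) → ℝ) : christoffel a 3 2 1 = fun _ => (0:ℝ) := by
  funext x
  simp [christoffel, gUp, gLow_def, pd, Fin.sum_univ_four] <;> ring

lemma chr322 (a : (Fin 4 → ℝ) → ℝ) : christoffel a 3 2 2 = fun x => (-1/2:ℝ) * pd 1 a x := by
  funext x
  simp [christoffel, gUp, gLow_def, pd, Fin.sum_univ_four] <;> ring

lemma chr323 (a : (Fin 4 → ℝ) → ℝ) : christoffel a 3 2 3 = fun _ => (0:ℝ) := by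
  funext x
  simp [christoffel, gUp, gLow_def, pd, Fin.sum_univ_four] <;> ring

lemma chr330 (a : (Fin 4 → ℝ) → ℝ) : christoffel a 3 3 0 = fun _ => (0:ℝ) := by
  funext x
  simp [christoffel, gUp, gLow_def, pd, Fin.sum_univ_four] <;> ring

lemma chr331 (a : (Fin 4 → ℝ) → ℝ) : christoffel a 3 3 1 = fun _ => (0:ℝ) := by
  funext x
  simp [christoffel, gUp, gLow_def, pd, Fin.sum_univ_four] <;> ring

lemma chr332 (a : (Fin 4 → ℝ) → ℝ) : christoffel a 3 3 2 = fun _ => (0:ℝ) := by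
  funext x
  simp [christoffel, gUp, gLow_def, pd, Fin.sum_univ_four] <;> ring

lemma chr333 (a : (Fin 4 → ℝ) → ℝ) : christoffel a 3 3 3 = fun x => (-1/2:ℝ) * pd 1 a x := by
  funext x
  simp [christoffel, gUp, gLow_def, pd, Fin.sum_univ_four] <;> ring

-- names: chr000 chr001 chr002 chr003 chr010 chr011 chr012 chr013 chr020 chr021 chr022 chr023 chr030 chr031 chr032 chr033 chr100 chr101 chr102 chr103 chr110 chr111 chr112 chr113 chr120 chr121 chr122 chr123 chr130 chr131 chr132 chr133 chr200 chr201 chr202 chr203 chr210 chr211 chr212 chr213 chr220 chr221 chr222 chr223 chr230 chr231 chr232 chr233 chr300 chr301 chr302 chr303 chr310 chr311 chr312 chr313 chr320 chr321 chr322 chr323 chr330 chr331 chr332 chr333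

lemma diff_pd {a : (Fin 4 → ℝ) → ℝ} (ha : ContDiff ℝ (⊤ : ℕ∞) a) (j : Fin 4) :
    Differentiable ℝ (pd j a) := by
  have h : ContDiff ℝ (⊤ : ℕ∞) fun x => (fderiv ℝ a x) (Pi.single j 1 : Fin 4 → ℝ) :=
    (ha.fderiv_right (by simp)).clm_apply contDiff_const
  exact h.differentiable (by simp)

lemma pd_zero (i : Fin 4) : pd i (fun _ => (0:ℝ)) = fun _ => (0:ℝ) := by
  funext x; simp [pd]

lemma pd_cmul {f : (Fin 4 → ℝ) → ℝ} (hf : Differentiable ℝ f) (c : ℝ) (i : Fin 4) :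
    pd i (fun y => c * f y) = fun x => c * pd i f x := by
  funext x
  simp only [pd]
  rw [fderiv_const_mul (hf x)]
  simp

/-- the scalar curvature of the Walker metric `g_a` equals `a_{11} + a_{22}`. -/
theorem walker_scalar_curvature (a : (Fin 4 → ℝ) → ℝ) (ha : ContDiff ℝ (⊤ : ℕ∞) a) :
    ∀ x : Fin 4 → ℝ, scalarCurv a x = pd 0 (pd 0 a) x + pd 1 (pd 1 a) x := by
  intro x
  have hh : ∀ (c : ℝ) (i j : Fin 4), pd i (fun y => c * pd j a y) = fun y => c * pd i (pd j a) y :=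
    fun c i j => pd_cmul (diff_pd ha j) c i
  simp only [scalarCurv, ricci, curv, Fin.sum_univ_four,
    chr000, chr001, chr002, chr003, chr010, chr011, chr012, chr013,
    chr020, chr021, chr022, chr023, chr030, chr031, chr032, chr033,
    chr100, chr101, chr102, chr103, chr110, chr111, chr112, chr113,
    chr120, chr121, chr122, chr123, chr130, chr131, chr132, chr133,
    chr200, chr201, chr202, chr203, chr210, chr211, chr212, chr213,
    chr220, chr221, chr222, chr223, chr230, chr231, chr232, chr233,
    chr300, chr301, chr302, chr303, chr310, chr311, chr312, chr313,
    chr320, chr321, chr322, chr323, chr330, chr331, chr332, chr333,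
    pd_zero, hh, gUp]
  simp only [Fin.isValue, show ((0:Fin 4)=2)=False by simp, show ((2:Fin 4)=0)=False by simp, show ((0:Fin 4)=1)=False by simp, show ((1:Fin 4)=0)=False by simp, show ((0:Fin 4)=3)=False by simp, show ((3:Fin 4)=0)=False by simp, show ((1:Fin 4)=2)=False by simp, show ((2:Fin 4)=1)=False by simp, show ((1:Fin 4)=3)=False by simp, show ((3:Fin 4)=1)=False by simp, show ((2:Fin 4)=3)=False by simp, show ((3:Fin 4)=2)=False by simp, show ((0:Fin 4)=0)=True by simp, show ((1:Fin 4)=1)=True by simp, show ((2:Fin 4)=2)=True by simp, show ((3:Fin 4)=3)=True by simp, if_true, if_false, true_and, and_true, false_and, and_false, true_or, or_true, false_or, or_false, if_neg, if_pos]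
  norm_num
  ring
end

section
/- Let ξ : ℝ² → ℝ be any smooth function and let a(x_1,x_2,x_3,x_4) = x_1/(2 − (1/2)x_3 − (1/2)x_4) + x_2/(2 − (1/2)x_3 − (1/2)x_4) + ξ(x_3,x_4), defined on the open set U = {x ∈ ℝ⁴ : x_3 + x_4 ≠ 4}. Then the Walker metric g_a is Einstein on U, i.e. ρ_{ij} = (τ/4)·g_{ij} for all i,j at every point of U. -/
open scoped BigOperators

section API
variable {f g : (Fin 4 → ℝ) → ℝ} {y : Fin 4 → ℝ} {i j : Fin 4} {c : ℝ}

lemma pd_const (i : Fin 4) (c : ℝ) (y : Fin 4 → ℝ) : pd i (fun _ => c) y = 0 := by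
  simp [pd]

lemma pd_add (hf : DifferentiableAt ℝ f y) (hg : DifferentiableAt ℝ g y) :
    pd i (fun z => f z + g z) y = pd i f y + pd i g y := by
  simp [pd, fderiv_fun_add hf hg]

lemma pd_sub (hf : DifferentiableAt ℝ f y) (hg : DifferentiableAt ℝ g y) :
    pd i (fun z => f z - g z) y = pd i f y - pd i g y := by
  simp [pd, fderiv_fun_sub hf hg]

lemma pd_mul (hf : DifferentiableAt ℝ f y) (hg : DifferentiableAt ℝ g y) :
    pd i (fun z => f z * g z) y = f y * pd i g y + pd i f y * g y := by
  simp [pd, fderiv_fun_mul hf hg, mul_comm]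

lemma pd_neg : pd i (fun z => -f z) y = -pd i f y := by
  simp [pd, fderiv_neg]

lemma pd_const_mul (hf : DifferentiableAt ℝ f y) (c : ℝ) :
    pd i (fun z => c * f z) y = c * pd i f y := by
  simp [pd, fderiv_const_mul hf]

lemma pd_inv (hg : DifferentiableAt ℝ g y) (h0 : g y ≠ 0) :
    pd i (fun z => (g z)⁻¹) y = -pd i g y / (g y)^2 := by
  have h : fderiv ℝ (Inv.inv ∘ g) y = (fderiv ℝ (fun t : ℝ => t⁻¹) (g y)).comp (fderiv ℝ g y) :=
    fderiv_comp y (differentiableAt_inv h0) hg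
  have h2 : (fun z => (g z)⁻¹) = Inv.inv ∘ g := rfl
  simp [pd, h2, h, fderiv_inv]
  ring

lemma pd_div (hf : DifferentiableAt ℝ f y) (hg : DifferentiableAt ℝ g y) (h0 : g y ≠ 0) :
    pd i (fun z => f z / g z) y = (pd i f y * g y - f y * pd i g y) / (g y)^2 := by
  have : (fun z => f z / g z) = fun z => f z * (g z)⁻¹ := by
    funext z; rw [div_eq_mul_inv]
  rw [this, pd_mul (g := fun z => (g z)⁻¹) hf (hg.inv h0), pd_inv hg h0]
  field_simp
  ring

lemma pd_coord (i j : Fin 4) (y : Fin 4 → ℝ) :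
    pd i (fun z => z j) y = if j = i then 1 else 0 := by
  have h : HasFDerivAt (fun z : Fin 4 → ℝ => z j)
      (ContinuousLinearMap.proj j : (Fin 4 → ℝ) →L[ℝ] ℝ) y :=
    (ContinuousLinearMap.proj (R := ℝ) (φ := fun _ : Fin 4 => ℝ) j).hasFDerivAt
  simp [pd, h.fderiv, Pi.single_apply]

end API

noncomputable def dW : (Fin 4 → ℝ) → ℝ := fun y => 2 - (1/2) * y 2 - (1/2) * y 3
noncomputable def bW : (Fin 4 → ℝ) → ℝ := fun y => (dW y)⁻¹

noncomputable def LW : (Fin 4 → ℝ) →L[ℝ] (Fin 2 → ℝ) :=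
  ContinuousLinearMap.pi
    ![ContinuousLinearMap.proj (R := ℝ) (φ := fun _ : Fin 4 => ℝ) 2,
      ContinuousLinearMap.proj (R := ℝ) (φ := fun _ : Fin 4 => ℝ) 3]

lemma LW_apply (y : Fin 4 → ℝ) : LW y = ![y 2, y 3] := by
  funext i
  fin_cases i <;> simp [LW, ContinuousLinearMap.pi_apply]

lemma LW_single0 : LW (Pi.single 0 1) = 0 := by
  rw [LW_apply]; funext i; fin_cases i <;> simp [Pi.single_apply]

lemma LW_single1 : LW (Pi.single 1 1) = 0 := by
  rw [LW_apply]; funext i; fin_cases i <;> simp [Pi.single_apply]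

lemma LW_single2 : LW (Pi.single 2 1) = Pi.single 0 1 := by
  rw [LW_apply]; funext i; fin_cases i <;> simp [Pi.single_apply]

lemma LW_single3 : LW (Pi.single 3 1) = Pi.single 1 1 := by
  rw [LW_apply]; funext i; fin_cases i <;> simp [Pi.single_apply]

lemma comp2_eq (h : (Fin 2 → ℝ) → ℝ) : (fun z : Fin 4 → ℝ => h ![z 2, z 3]) = h ∘ LW := by
  funext z; simp [LW_apply]

lemma diff_comp2 {h : (Fin 2 → ℝ) → ℝ} {y : Fin 4 → ℝ}
    (hh : DifferentiableAt ℝ h ![y 2, y 3]) :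
    DifferentiableAt ℝ (fun z => h ![z 2, z 3]) y := by
  rw [comp2_eq]
  exact (LW_apply y ▸ hh).comp y LW.differentiableAt

lemma pd_comp2 {h : (Fin 2 → ℝ) → ℝ} {y : Fin 4 → ℝ}
    (hh : DifferentiableAt ℝ h ![y 2, y 3]) (i : Fin 4) :
    pd i (fun z => h ![z 2, z 3]) y = fderiv ℝ h ![y 2, y 3] (LW (Pi.single i 1)) := by
  rw [comp2_eq]
  unfold pd
  rw [fderiv_comp y (LW_apply y ▸ hh) LW.differentiableAt]
  simp [LW.fderiv, LW_apply]

lemma dW_ne {y : Fin 4 → ℝ} (hy : y 2 + y 3 ≠ 4) : dW y ≠ 0 := by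
  unfold dW; intro h; apply hy; linarith

lemma diff_coord (j : Fin 4) (y : Fin 4 → ℝ) : DifferentiableAt ℝ (fun z : Fin 4 → ℝ => z j) y :=
  (ContinuousLinearMap.proj (R := ℝ) (φ := fun _ : Fin 4 => ℝ) j).differentiableAt

lemma diff_dW (y : Fin 4 → ℝ) : DifferentiableAt ℝ dW y := by
  unfold dW
  exact ((differentiableAt_const _).sub ((diff_coord 2 y).const_mul _)).sub
    ((diff_coord 3 y).const_mul _)

lemma diff_bW {y : Fin 4 → ℝ} (hy : y 2 + y 3 ≠ 4) : DifferentiableAt ℝ bW y :=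
  (diff_dW y).inv (dW_ne hy)

lemma pd_dW (i : Fin 4) (y : Fin 4 → ℝ) :
    pd i dW y = -(1/2) * (if (2:Fin 4) = i then 1 else 0) - (1/2) * (if (3:Fin 4) = i then 1 else 0) := by
  unfold dW
  rw [show (fun y : Fin 4 → ℝ => 2 - (1/2) * y 2 - (1/2) * y 3)
      = fun y : Fin 4 → ℝ => (2 - (1/2) * y 2) - (1/2) * y 3 from rfl]
  rw [pd_sub (f := fun y => 2 - (1/2) * y 2) (g := fun y => (1/2) * y 3) ((differentiableAt_const _).sub ((diff_coord 2 y).const_mul _))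
      ((diff_coord 3 y).const_mul _)]
  rw [pd_sub (differentiableAt_const _) ((diff_coord 2 y).const_mul _)]
  rw [pd_const_mul (diff_coord 2 y), pd_const_mul (diff_coord 3 y), pd_const, pd_coord, pd_coord]
  ring

lemma pd_bW {y : Fin 4 → ℝ} (hy : y 2 + y 3 ≠ 4) (i : Fin 4) :
    pd i bW y = ((if (2:Fin 4) = i then 1 else 0) + (if (3:Fin 4) = i then 1 else 0)) * (bW y)^2 / 2 := by
  unfold bW
  rw [pd_inv (diff_dW y) (dW_ne hy), pd_dW]
  rw [inv_pow, div_eq_mul_inv, div_eq_mul_inv]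
  ring

section Aderiv
variable {ξ : (Fin 2 → ℝ) → ℝ} (hξ : ContDiff ℝ (⊤ : ℕ∞) ξ)
  {a : (Fin 4 → ℝ) → ℝ}
  (ha : ∀ x : Fin 4 → ℝ,
      a x = x 0 / (2 - (1/2) * x 2 - (1/2) * x 3)
        + x 1 / (2 - (1/2) * x 2 - (1/2) * x 3) + ξ ![x 2, x 3])

include ha in
lemma a_eq : a = fun z => z 0 / dW z + z 1 / dW z + ξ ![z 2, z 3] := by
  funext z; rw [ha]; rfl

/-- first derivative of ξ in direction v, as a ContDiff function -/
lemma diff_xid (hξ : ContDiff ℝ (⊤ : ℕ∞) ξ) (v : Fin 2 → ℝ) :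
    Differentiable ℝ (fun w => fderiv ℝ ξ w v) :=
  ((hξ.fderiv_right (m := 1) (by exact WithTop.coe_le_coe.mpr le_top)).clm_apply contDiff_const).differentiable one_ne_zero

lemma diff_quot (j : Fin 4) {y : Fin 4 → ℝ} (hy : y 2 + y 3 ≠ 4) :
    DifferentiableAt ℝ (fun z : Fin 4 → ℝ => z j / dW z) y := by
  simp only [div_eq_mul_inv]
  exact (diff_coord j y).mul ((diff_dW y).inv (dW_ne hy))

include hξ ha in
lemma diff_a {y : Fin 4 → ℝ} (hy : y 2 + y 3 ≠ 4) : DifferentiableAt ℝ a y := by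
  rw [a_eq ha]
  exact ((diff_quot 0 hy).add (diff_quot 1 hy)).add
    (diff_comp2 (hξ.differentiable (by simp) _))

include hξ ha in
lemma pd_a {y : Fin 4 → ℝ} (hy : y 2 + y 3 ≠ 4) (i : Fin 4) :
    pd i a y
      = ((if (0:Fin 4) = i then 1 else 0) + (if (1:Fin 4) = i then 1 else 0)) * bW y
        + (y 0 + y 1) * ((if (2:Fin 4) = i then 1 else 0) + (if (3:Fin 4) = i then 1 else 0))
            * (bW y * bW y) / 2
        + fderiv ℝ ξ ![y 2, y 3] (LW (Pi.single i 1)) := by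
  rw [a_eq ha]
  rw [pd_add (f := fun z => z 0 / dW z + z 1 / dW z) ((diff_quot 0 hy).add (diff_quot 1 hy))
      (diff_comp2 (hξ.differentiable (by simp) _))]
  rw [pd_add (diff_quot 0 hy) (diff_quot 1 hy)]
  rw [pd_div (diff_coord 0 y) (diff_dW y) (dW_ne hy),
      pd_div (diff_coord 1 y) (diff_dW y) (dW_ne hy),
      pd_comp2 (hξ.differentiable (by simp) _),
      pd_coord, pd_coord, pd_dW]
  have h1 : bW y = (dW y)⁻¹ := rfl
  have h2 : dW y ≠ 0 := dW_ne hy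
  rw [h1]
  field_simp
  split_ifs <;> ring
end Aderiv

section Aderiv2
variable {ξ : (Fin 2 → ℝ) → ℝ} (hξ : ContDiff ℝ (⊤ : ℕ∞) ξ)
  {a : (Fin 4 → ℝ) → ℝ}
  (ha : ∀ x : Fin 4 → ℝ,
      a x = x 0 / (2 - (1/2) * x 2 - (1/2) * x 3)
        + x 1 / (2 - (1/2) * x 2 - (1/2) * x 3) + ξ ![x 2, x 3])

include hξ ha in
lemma pd_a0 {y : Fin 4 → ℝ} (hy : y 2 + y 3 ≠ 4) : pd 0 a y = bW y := by
  rw [pd_a hξ ha hy 0, LW_single0]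
  simp

include hξ ha in
lemma pd_a1 {y : Fin 4 → ℝ} (hy : y 2 + y 3 ≠ 4) : pd 1 a y = bW y := by
  rw [pd_a hξ ha hy 1, LW_single1]
  simp

include hξ ha in
lemma pd_a2 {y : Fin 4 → ℝ} (hy : y 2 + y 3 ≠ 4) :
    pd 2 a y = (y 0 + y 1) * (bW y * bW y) / 2 + fderiv ℝ ξ ![y 2, y 3] (Pi.single 0 1) := by
  rw [pd_a hξ ha hy 2, LW_single2]
  simp

include hξ ha in
lemma pd_a3 {y : Fin 4 → ℝ} (hy : y 2 + y 3 ≠ 4) :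
    pd 3 a y = (y 0 + y 1) * (bW y * bW y) / 2 + fderiv ℝ ξ ![y 2, y 3] (Pi.single 1 1) := by
  rw [pd_a hξ ha hy 3, LW_single3]
  simp

end Aderiv2

def UW : Set (Fin 4 → ℝ) := {y | y 2 + y 3 ≠ 4}

lemma isOpen_UW : IsOpen UW := by
  have : UW = (fun y : Fin 4 → ℝ => y 2 + y 3) ⁻¹' {(4:ℝ)}ᶜ := rfl
  rw [this]
  exact IsOpen.preimage (by continuity) isOpen_compl_singleton

lemma evU {f g : (Fin 4 → ℝ) → ℝ} {x : Fin 4 → ℝ} (hx : x 2 + x 3 ≠ 4)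
    (h : ∀ y : Fin 4 → ℝ, y 2 + y 3 ≠ 4 → f y = g y) : f =ᶠ[nhds x] g :=
  Filter.eventuallyEq_of_mem (isOpen_UW.mem_nhds hx) h

lemma pd_congr {f g : (Fin 4 → ℝ) → ℝ} {x : Fin 4 → ℝ} (i : Fin 4)
    (h : f =ᶠ[nhds x] g) : pd i f x = pd i g x := by
  simp [pd, h.fderiv_eq]

lemma pd_div_const {f : (Fin 4 → ℝ) → ℝ} {y : Fin 4 → ℝ} {i : Fin 4}
    (hf : DifferentiableAt ℝ f y) (c : ℝ) :
    pd i (fun z => f z / c) y = pd i f y / c := by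
  rw [show (fun z => f z / c) = fun z => c⁻¹ * f z by funext z; rw [div_eq_inv_mul]]
  rw [pd_const_mul hf, div_eq_inv_mul]

lemma diff_bb {y : Fin 4 → ℝ} (hy : y 2 + y 3 ≠ 4) :
    DifferentiableAt ℝ (fun z : Fin 4 → ℝ => (z 0 + z 1) * (bW z * bW z) / 2) y := by
  have h := ((diff_coord 0 y).add (diff_coord 1 y)).mul ((diff_bW hy).mul (diff_bW hy))
  simp only [div_eq_mul_inv]
  exact h.mul_const _

lemma pd_bb {y : Fin 4 → ℝ} (hy : y 2 + y 3 ≠ 4) (i : Fin 4) :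
    pd i (fun z : Fin 4 → ℝ => (z 0 + z 1) * (bW z * bW z) / 2) y
      = ((if (0:Fin 4) = i then 1 else 0) + (if (1:Fin 4) = i then 1 else 0)) * (bW y * bW y) / 2
        + (y 0 + y 1) * bW y
            * (((if (2:Fin 4) = i then 1 else 0) + (if (3:Fin 4) = i then 1 else 0)) * (bW y)^2 / 2) := by
  rw [pd_div_const (f := fun z => (z 0 + z 1) * (bW z * bW z)) (((diff_coord 0 y).add (diff_coord 1 y)).mul ((diff_bW hy).mul (diff_bW hy))),
      pd_mul (f := fun z => z 0 + z 1) (g := fun z => bW z * bW z) ((diff_coord 0 y).add (diff_coord 1 y)) ((diff_bW hy).mul (diff_bW hy)),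
      pd_add (diff_coord 0 y) (diff_coord 1 y), pd_coord, pd_coord,
      pd_mul (diff_bW hy) (diff_bW hy), pd_bW hy]
  ring

section Aderiv3
variable {ξ : (Fin 2 → ℝ) → ℝ} (hξ : ContDiff ℝ (⊤ : ℕ∞) ξ)
  {a : (Fin 4 → ℝ) → ℝ}
  (ha : ∀ x : Fin 4 → ℝ,
      a x = x 0 / (2 - (1/2) * x 2 - (1/2) * x 3)
        + x 1 / (2 - (1/2) * x 2 - (1/2) * x 3) + ξ ![x 2, x 3])

include hξ ha in
lemma ev_pd2a {x : Fin 4 → ℝ} (hx : x 2 + x 3 ≠ 4) :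
    pd 2 a =ᶠ[nhds x] fun z => (z 0 + z 1) * (bW z * bW z) / 2
      + (fun w => fderiv ℝ ξ w (Pi.single 0 1)) ![z 2, z 3] :=
  evU hx (fun y hy => pd_a2 hξ ha hy)

include hξ ha in
lemma ev_pd3a {x : Fin 4 → ℝ} (hx : x 2 + x 3 ≠ 4) :
    pd 3 a =ᶠ[nhds x] fun z => (z 0 + z 1) * (bW z * bW z) / 2
      + (fun w => fderiv ℝ ξ w (Pi.single 1 1)) ![z 2, z 3] :=
  evU hx (fun y hy => pd_a3 hξ ha hy)

include hξ ha in
lemma diff_pd2a {x : Fin 4 → ℝ} (hx : x 2 + x 3 ≠ 4) : DifferentiableAt ℝ (pd 2 a) x :=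
  DifferentiableAt.congr_of_eventuallyEq
    ((diff_bb hx).add (diff_comp2 ((diff_xid hξ (Pi.single 0 1)).differentiableAt)))
    (ev_pd2a hξ ha hx)

include hξ ha in
lemma diff_pd3a {x : Fin 4 → ℝ} (hx : x 2 + x 3 ≠ 4) : DifferentiableAt ℝ (pd 3 a) x :=
  DifferentiableAt.congr_of_eventuallyEq
    ((diff_bb hx).add (diff_comp2 ((diff_xid hξ (Pi.single 1 1)).differentiableAt)))
    (ev_pd3a hξ ha hx)

include hξ ha in
lemma pd0_pd2a {x : Fin 4 → ℝ} (hx : x 2 + x 3 ≠ 4) :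
    pd 0 (pd 2 a) x = bW x * bW x / 2 := by
  rw [pd_congr 0 (ev_pd2a hξ ha hx),
      pd_add (diff_bb hx) (diff_comp2 ((diff_xid hξ (Pi.single 0 1)).differentiableAt)),
      pd_bb hx, pd_comp2 ((diff_xid hξ (Pi.single 0 1)).differentiableAt), LW_single0, map_zero]
  simp

include hξ ha in
lemma pd1_pd2a {x : Fin 4 → ℝ} (hx : x 2 + x 3 ≠ 4) :
    pd 1 (pd 2 a) x = bW x * bW x / 2 := by
  rw [pd_congr 1 (ev_pd2a hξ ha hx),
      pd_add (diff_bb hx) (diff_comp2 ((diff_xid hξ (Pi.single 0 1)).differentiableAt)),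
      pd_bb hx, pd_comp2 ((diff_xid hξ (Pi.single 0 1)).differentiableAt), LW_single1, map_zero]
  simp

include hξ ha in
lemma pd0_pd3a {x : Fin 4 → ℝ} (hx : x 2 + x 3 ≠ 4) :
    pd 0 (pd 3 a) x = bW x * bW x / 2 := by
  rw [pd_congr 0 (ev_pd3a hξ ha hx),
      pd_add (diff_bb hx) (diff_comp2 ((diff_xid hξ (Pi.single 1 1)).differentiableAt)),
      pd_bb hx, pd_comp2 ((diff_xid hξ (Pi.single 1 1)).differentiableAt), LW_single0, map_zero]
  simp

include hξ ha in
lemma pd1_pd3a {x : Fin 4 → ℝ} (hx : x 2 + x 3 ≠ 4) :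
    pd 1 (pd 3 a) x = bW x * bW x / 2 := by
  rw [pd_congr 1 (ev_pd3a hξ ha hx),
      pd_add (diff_bb hx) (diff_comp2 ((diff_xid hξ (Pi.single 1 1)).differentiableAt)),
      pd_bb hx, pd_comp2 ((diff_xid hξ (Pi.single 1 1)).differentiableAt), LW_single1, map_zero]
  simp

end Aderiv3

noncomputable def gam (a : (Fin 4 → ℝ) → ℝ) (k i j : Fin 4) : (Fin 4 → ℝ) → ℝ :=
  if (k = 0 ∧ ((i = 0 ∧ j = 2) ∨ (i = 2 ∧ j = 0) ∨ (i = 1 ∧ j = 2) ∨ (i = 2 ∧ j = 1)))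
     ∨ (k = 1 ∧ ((i = 0 ∧ j = 3) ∨ (i = 3 ∧ j = 0) ∨ (i = 1 ∧ j = 3) ∨ (i = 3 ∧ j = 1))) then
    fun y => bW y / 2
  else if (k = 2 ∨ k = 3) ∧ ((i = 2 ∧ j = 2) ∨ (i = 3 ∧ j = 3)) then
    fun y => -(bW y / 2)
  else if k = 0 ∧ i = 2 ∧ j = 2 then fun y => (a y * bW y + pd 2 a y) / 2
  else if k = 0 ∧ i = 3 ∧ j = 3 then fun y => (a y * bW y - pd 2 a y) / 2
  else if k = 0 ∧ ((i = 2 ∧ j = 3) ∨ (i = 3 ∧ j = 2)) then fun y => pd 3 a y / 2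
  else if k = 1 ∧ i = 2 ∧ j = 2 then fun y => (a y * bW y - pd 3 a y) / 2
  else if k = 1 ∧ i = 3 ∧ j = 3 then fun y => (a y * bW y + pd 3 a y) / 2
  else if k = 1 ∧ ((i = 2 ∧ j = 3) ∨ (i = 3 ∧ j = 2)) then fun y => pd 2 a y / 2
  else fun _ => 0

lemma pd_gLow (a : (Fin 4 → ℝ) → ℝ) (d j l : Fin 4) (y : Fin 4 → ℝ) :
    pd d (gLow a j l) y = if (j = 2 ∧ l = 2) ∨ (j = 3 ∧ l = 3) then pd d a y else 0 := by
  by_cases h : (j = 2 ∧ l = 2) ∨ (j = 3 ∧ l = 3)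
  · have hg : gLow a j l = a := by
      funext z
      rcases h with ⟨h1, h2⟩ | ⟨h1, h2⟩ <;> subst h1 <;> subst h2 <;> simp [gLow]
    rw [hg, if_pos h]
  · have hg : gLow a j l = fun _ =>
        (if (j = 0 ∧ l = 2) ∨ (j = 2 ∧ l = 0) ∨ (j = 1 ∧ l = 3) ∨ (j = 3 ∧ l = 1) then (1:ℝ) else 0) := by
      funext z
      simp only [gLow, if_neg h]
    rw [hg, pd_const, if_neg h]

section Chris
variable {ξ : (Fin 2 → ℝ) → ℝ} (hξ : ContDiff ℝ (⊤ : ℕ∞) ξ)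
  {a : (Fin 4 → ℝ) → ℝ}
  (ha : ∀ x : Fin 4 → ℝ,
      a x = x 0 / (2 - (1/2) * x 2 - (1/2) * x 3)
        + x 1 / (2 - (1/2) * x 2 - (1/2) * x 3) + ξ ![x 2, x 3])

include hξ ha in
lemma chris_eq {y : Fin 4 → ℝ} (hy : y 2 + y 3 ≠ 4) (k i j : Fin 4) :
    christoffel a k i j y = gam a k i j y := by
  fin_cases k <;> fin_cases i <;> fin_cases j <;>
    simp [christoffel, Fin.sum_univ_four, gUp, gam, pd_gLow,
      pd_a0 hξ ha hy, pd_a1 hξ ha hy] <;> ring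

end Chris

/-- with `b = c = 1/(2 − x₃/2 − x₄/2)`, the Walker metric `g_a` is Einstein on
the open set where `x₃ + x₄ ≠ 4`. -/
theorem walker_einstein_example (ξ : (Fin 2 → ℝ) → ℝ) (hξ : ContDiff ℝ (⊤ : ℕ∞) ξ)
    (a : (Fin 4 → ℝ) → ℝ)
    (ha : ∀ x : Fin 4 → ℝ,
      a x = x 0 / (2 - (1/2) * x 2 - (1/2) * x 3)
        + x 1 / (2 - (1/2) * x 2 - (1/2) * x 3) + ξ ![x 2, x 3]) :
    ∀ x : Fin 4 → ℝ, x 2 + x 3 ≠ 4 →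
      ∀ i j : Fin 4, ricci a i j x = scalarCurv a x / 4 * gLow a i j x := by
  intro x hx i j
  have hdA : DifferentiableAt ℝ a x := diff_a hξ ha hx
  have hdB : DifferentiableAt ℝ bW x := diff_bW hx
  have hd2 : DifferentiableAt ℝ (pd 2 a) x := diff_pd2a hξ ha hx
  have hd3 : DifferentiableAt ℝ (pd 3 a) x := diff_pd3a hξ ha hx
  have hAB : DifferentiableAt ℝ (fun y => a y * bW y) x := hdA.mul hdB
  have Db : ∀ d : Fin 4, pd d (fun y => bW y / 2) x
      = ((if (2:Fin 4) = d then 1 else 0) + (if (3:Fin 4) = d then 1 else 0)) * (bW x)^2/4 := by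
    intro d; rw [pd_div_const hdB, pd_bW hx]; ring
  have Dnb : ∀ d : Fin 4, pd d (fun y => -(bW y / 2)) x
      = -(((if (2:Fin 4) = d then 1 else 0) + (if (3:Fin 4) = d then 1 else 0)) * (bW x)^2/4) := by
    intro d; rw [pd_neg, Db]
  have D0 : ∀ d : Fin 4, pd d (fun _ : Fin 4 → ℝ => (0:ℝ)) x = 0 := fun d => pd_const d 0 x
  have DEp2 : pd 0 (fun y => (a y * bW y + pd 2 a y)/2) x = 3 * (bW x)^2/4 := by
    rw [pd_div_const (f := fun y => a y * bW y + pd 2 a y) (hAB.add hd2), pd_add hAB hd2, pd_mul hdA hdB, pd_a0 hξ ha hx,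
      pd_bW hx, pd0_pd2a hξ ha hx]
    simp; ring
  have DEm2 : pd 0 (fun y => (a y * bW y - pd 2 a y)/2) x = (bW x)^2/4 := by
    rw [pd_div_const (f := fun y => a y * bW y - pd 2 a y) (hAB.sub hd2), pd_sub hAB hd2, pd_mul hdA hdB, pd_a0 hξ ha hx,
      pd_bW hx, pd0_pd2a hξ ha hx]
    simp; ring
  have DEp3 : pd 1 (fun y => (a y * bW y + pd 3 a y)/2) x = 3 * (bW x)^2/4 := by
    rw [pd_div_const (f := fun y => a y * bW y + pd 3 a y) (hAB.add hd3), pd_add hAB hd3, pd_mul hdA hdB, pd_a1 hξ ha hx,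
      pd_bW hx, pd1_pd3a hξ ha hx]
    simp; ring
  have DEm3 : pd 1 (fun y => (a y * bW y - pd 3 a y)/2) x = (bW x)^2/4 := by
    rw [pd_div_const (f := fun y => a y * bW y - pd 3 a y) (hAB.sub hd3), pd_sub hAB hd3, pd_mul hdA hdB, pd_a1 hξ ha hx,
      pd_bW hx, pd1_pd3a hξ ha hx]
    simp; ring
  have DEf3 : pd 0 (fun y => pd 3 a y / 2) x = (bW x)^2/4 := by
    rw [pd_div_const hd3, pd0_pd3a hξ ha hx]; ring
  have DEf2 : pd 1 (fun y => pd 2 a y / 2) x = (bW x)^2/4 := by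
    rw [pd_div_const hd2, pd1_pd2a hξ ha hx]; ring
  have hval : ∀ k i j : Fin 4, christoffel a k i j x = gam a k i j x :=
    fun k i j => chris_eq hξ ha hx k i j
  have hpdc : ∀ d k i j : Fin 4, pd d (christoffel a k i j) x = pd d (gam a k i j) x :=
    fun d k i j => pd_congr d (evU hx (fun y hy => chris_eq hξ ha hy k i j))
  have hric : ∀ p q : Fin 4, ricci a p q x = 0 := by
    intro p q
    fin_cases p <;> fin_cases q <;>
    · simp only [ricci, curv, Fin.sum_univ_four]
      simp [hpdc, hval, gam, Db, Dnb, D0, DEp2, DEm2, DEp3, DEm3, DEf3, DEf2]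
      try ring
  have hscal : scalarCurv a x = 0 := by
    simp [scalarCurv, Fin.sum_univ_four, hric]
  rw [hric i j, hscal]
  simp
end
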